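/- Let Ω be the open ball in ℝ³ of volume 1 centred at the origin, i.e. of radius (3/(4π))^{1/3}. For s ∈ (0,1), let z_1(s) = (s,0,0), z_2(s) = (−s,0,0) and w = (0,0). Then the Laguerre cells are C_1((z_1(s),z_2(s)),w) = {x ∈ Ω : x·e₁ ≥ 0} and C_2((z_1(s),z_2(s)),w) = {x ∈ Ω : x·e₁ ≤ 0}, each of Lebesgue measure ½, the centroid x_* = 2 ∫_{{x∈Ω : x·e₁ ≥ 0}} x dx satisfies x_*·e₁ > 0, and for s ∈ (−1,0) the roles are interchanged, so that the centroid of C_1((z_1(s),z_2(s)),w) equals x_* for s ∈ (0,1) and −x_* for s ∈ (−1,0). Consequently, the function s ↦ (centroid of C_1((z_1(s),z_2(s)),w)) on (−1,0) ∪ (0,1) admits no continuous extension to s = 0; hence the optimal centroid map for the mass vector (½,½) does not extend continuously to seed vectors with z_1 = z_2. -/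

import Mathlib

open MeasureTheory Set Filter
open scoped ENNReal Topology RealInnerProductSpace

noncomputable section

/-- Geostrophic space: `ℝ³` with the Euclidean norm. -/
abbrev E3 : Type := EuclideanSpace ℝ (Fin 3)

/-- The matrix `J` encoding planetary rotation: `J₁₂ = -1`, `J₂₁ = 1`, all other entries `0`. -/
def matJ : Matrix (Fin 3) (Fin 3) ℝ := !![0, -1, 0; 1, 0, 0; 0, 0, 0]

/-- `J` as a (continuous) linear map on `ℝ³`. -/
def J : E3 →L[ℝ] E3 := LinearMap.toContinuousLinearMap (Matrix.toEuclideanLin matJ)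

/-- The Laguerre cell `C_i(z, w)` of `Ω` generated by seeds `z` and weights `w`. -/
def lagCell {N : ℕ} (Ω : Set E3) (z : Fin N → E3) (w : Fin N → ℝ) (i : Fin N) : Set E3 :=
  {x | x ∈ Ω ∧ ∀ j, ‖x - z i‖ ^ 2 - w i ≤ ‖x - z j‖ ^ 2 - w j}

/-- The open ball in `ℝ³` of volume 1 centred at the origin. -/
def unitVolBall : Set E3 := Metric.ball 0 ((3 / (4 * Real.pi)) ^ ((1:ℝ) / 3))

/-- The two seeds `z₁(s) = (s,0,0)` and `z₂(s) = (-s,0,0)`. -/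
def seedsPair (s : ℝ) : Fin 2 → E3 :=
  ![EuclideanSpace.single 0 s, EuclideanSpace.single 0 (-s)]

/-- The centroid of the first Laguerre cell generated by `(z₁(s), z₂(s))` with zero weights;
each cell has mass `½`, so the centroid is twice the integral of `x` over the cell. -/
def firstCentroid (s : ℝ) : E3 :=
  (2:ℝ) • ∫ x in lagCell unitVolBall (seedsPair s) ![0, 0] 0, x

/-- The centroid of the right half-ball. -/
def xstar : E3 := (2:ℝ) • ∫ x in {x : E3 | x ∈ unitVolBall ∧ 0 ≤ x 0}, x

/-!
For `s ≠ 0` the bisector of the seeds `±s e₁` is the plane `x₁ = 0`, so the first Laguerre cell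
is the right half-ball when `s > 0` and the left half-ball when `s < 0`. The point reflection
`x ↦ -x` preserves Lebesgue measure and swaps the two half-balls, so both have mass `½` and
their centroids are `x_*` and `-x_*`. Since `x_*` has positive first coordinate, `x_* ≠ -x_*`,
and the centroid map jumps at `s = 0`.
-/

theorem norm_sub_sq_le_norm_add_sq_iff {F : Type*} [NormedAddCommGroup F]
    [InnerProductSpace ℝ F] (x v : F) : ‖x - v‖ ^ 2 ≤ ‖x + v‖ ^ 2 ↔ 0 ≤ ⟪x, v⟫ := by
  rw [norm_sub_sq_real, norm_add_sq_real]
  constructor <;> intro h <;> linarith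

theorem EuclideanSpace.norm_sub_single_sq_le_iff {ι : Type*} [Fintype ι] [DecidableEq ι]
    (x : EuclideanSpace ℝ ι) (i : ι) (s : ℝ) :
    ‖x - single i s‖ ^ 2 ≤ ‖x - single i (-s)‖ ^ 2 ↔ 0 ≤ s * x i := by
  rw [show single i (-s) = -single i s from PiLp.single_neg 2 i, sub_neg_eq_add,
    norm_sub_sq_le_norm_add_sq_iff, inner_single_right, conj_trivial]

theorem EuclideanSpace.volume_coord_eq_zero {ι : Type*} [Fintype ι] (i : ι) :
    volume {x : EuclideanSpace ℝ ι | x i = 0} = 0 := by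
  classical
  let p : EuclideanSpace ℝ ι →ₗ[ℝ] ℝ := (proj i : EuclideanSpace ℝ ι →L[ℝ] ℝ)
  refine Measure.addHaar_submodule volume (LinearMap.ker p) fun h => ?_
  have : single i (1:ℝ) ∈ LinearMap.ker p := h ▸ Submodule.mem_top
  simp [p] at this

theorem setIntegral_id_neg {G : Type*} [NormedAddCommGroup G] [NormedSpace ℝ G]
    [MeasurableSpace G] [MeasurableNeg G] (μ : Measure G) [μ.IsNegInvariant] (s : Set G) :
    ∫ x in -s, x ∂μ = -∫ x in s, x ∂μ := by
  rw [← integral_neg]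
  simpa using (Measure.measurePreserving_neg μ).setIntegral_preimage_emb
    (MeasurableEquiv.neg G).measurableEmbedding (fun x => -x) s

theorem not_exists_continuousOn_extension_of_ne {X : Type*} [TopologicalSpace X] [T2Space X]
    {g : ℝ → X} {a b : X} (hab : a ≠ b) (ha : ∀ s ∈ Ioo (0:ℝ) 1, g s = a)
    (hb : ∀ s ∈ Ioo (-1:ℝ) 0, g s = b) :
    ¬ ∃ f : ℝ → X, ContinuousOn f (Ioo (-1:ℝ) 1) ∧ ∀ s ∈ Ioo (-1:ℝ) 1, s ≠ 0 → f s = g s := by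
  rintro ⟨f, hf, hfg⟩
  have hf0 : ContinuousAt f 0 := hf.continuousAt (Ioo_mem_nhds (by norm_num) (by norm_num))
  have right : f =ᶠ[𝓝[>] 0] fun _ => a := by
    filter_upwards [Ioo_mem_nhdsGT (show (0:ℝ) < 1 by norm_num)] with s hs
    rw [hfg s ⟨by linarith [hs.1], hs.2⟩ hs.1.ne', ha s hs]
  have left : f =ᶠ[𝓝[<] 0] fun _ => b := by
    filter_upwards [Ioo_mem_nhdsLT (show (-1:ℝ) < 0 by norm_num)] with s hs
    rw [hfg s ⟨hs.1, by linarith [hs.2]⟩ hs.2.ne, hb s hs]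
  have hfa : f 0 = a := tendsto_nhds_unique (hf0.tendsto.mono_left nhdsWithin_le_nhds)
    (tendsto_const_nhds.congr' right.symm)
  have hfb : f 0 = b := tendsto_nhds_unique (hf0.tendsto.mono_left nhdsWithin_le_nhds)
    (tendsto_const_nhds.congr' left.symm)
  exact hab (hfa.symm.trans hfb)

theorem lagCell_seedsPair_zero (Ω : Set E3) (s : ℝ) :
    lagCell Ω (seedsPair s) ![0, 0] 0 = {x | x ∈ Ω ∧ 0 ≤ s * x 0} := by
  ext x
  simp [lagCell, seedsPair, Fin.forall_fin_two, EuclideanSpace.norm_sub_single_sq_le_iff]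

theorem lagCell_seedsPair_one (Ω : Set E3) (s : ℝ) :
    lagCell Ω (seedsPair s) ![0, 0] 1 = {x | x ∈ Ω ∧ s * x 0 ≤ 0} := by
  ext x
  have h := EuclideanSpace.norm_sub_single_sq_le_iff x 0 (-s)
  rw [neg_neg, neg_mul, neg_nonneg] at h
  simp [lagCell, seedsPair, Fin.forall_fin_two, h]

def rightHalfBall : Set E3 := {x | x ∈ unitVolBall ∧ 0 ≤ x 0}

def leftHalfBall : Set E3 := {x | x ∈ unitVolBall ∧ x 0 ≤ 0}

theorem lagCell_seedsPair_zero_of_pos {s : ℝ} (hs : 0 < s) :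
    lagCell unitVolBall (seedsPair s) ![0, 0] 0 = rightHalfBall := by
  simp only [lagCell_seedsPair_zero, rightHalfBall, mul_nonneg_iff_of_pos_left hs]

theorem lagCell_seedsPair_one_of_pos {s : ℝ} (hs : 0 < s) :
    lagCell unitVolBall (seedsPair s) ![0, 0] 1 = leftHalfBall := by
  have h (x : ℝ) : s * x ≤ 0 ↔ x ≤ 0 := by simpa using mul_le_mul_iff_right₀ (b := x) (c := 0) hs
  simp only [lagCell_seedsPair_one, leftHalfBall, h]

theorem lagCell_seedsPair_zero_of_neg {s : ℝ} (hs : s < 0) :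
    lagCell unitVolBall (seedsPair s) ![0, 0] 0 = leftHalfBall := by
  have h (x : ℝ) : 0 ≤ s * x ↔ x ≤ 0 := by simpa using mul_le_mul_left_of_neg (a := 0) (b := x) hs
  simp only [lagCell_seedsPair_zero, leftHalfBall, h]

theorem neg_rightHalfBall : -rightHalfBall = leftHalfBall := by
  ext x
  simp [rightHalfBall, leftHalfBall, unitVolBall]

theorem measurableSet_rightHalfBall : MeasurableSet rightHalfBall :=
  measurableSet_ball.inter
    (isClosed_le continuous_const (by fun_prop : Continuous fun x : E3 => x 0)).measurableSet

theorem measurableSet_leftHalfBall : MeasurableSet leftHalfBall :=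
  measurableSet_ball.inter
    (isClosed_le (by fun_prop : Continuous fun x : E3 => x 0) continuous_const).measurableSet

theorem volume_unitVolBall : volume unitVolBall = 1 := by
  have hr : 0 ≤ (3 / (4 * Real.pi)) ^ ((1:ℝ) / 3) := by positivity
  have hcube : ((3 / (4 * Real.pi)) ^ ((1:ℝ) / 3)) ^ 3 * (Real.pi * 4 / 3) = 1 := by
    rw [← Real.rpow_natCast, ← Real.rpow_mul (by positivity)]
    norm_num
    field_simp
  rw [unitVolBall, EuclideanSpace.volume_ball_fin_three, ← ENNReal.ofReal_pow hr,
    ← ENNReal.ofReal_mul (by positivity), hcube, ENNReal.ofReal_one]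

theorem volume_rightHalfBall : volume rightHalfBall = ENNReal.ofReal (1/2) := by
  have hunion : rightHalfBall ∪ leftHalfBall = unitVolBall := by
    ext x
    simp only [rightHalfBall, leftHalfBall, mem_union, mem_ofPred_eq, ← and_or_left,
      le_total, and_true]
  have hinter : volume (rightHalfBall ∩ leftHalfBall) = 0 :=
    measure_mono_null (fun x hx => le_antisymm hx.2.2 hx.1.2)
      (EuclideanSpace.volume_coord_eq_zero 0)
  have hsum : volume rightHalfBall + volume rightHalfBall = 1 := by
    conv_lhs => enter [2]; rw [← Measure.measure_neg, neg_rightHalfBall]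
    rw [← measure_union_add_inter _ measurableSet_leftHalfBall, hinter, add_zero, hunion,
      volume_unitVolBall]
  rw [← two_mul, mul_comm] at hsum
  rw [ENNReal.eq_inv_of_mul_eq_one_left hsum, one_div, ENNReal.ofReal_inv_of_pos two_pos,
    ENNReal.ofReal_ofNat]

theorem volume_leftHalfBall : volume leftHalfBall = ENNReal.ofReal (1/2) := by
  rw [← neg_rightHalfBall, Measure.measure_neg, volume_rightHalfBall]

theorem xstar_zero_pos : 0 < xstar 0 := by
  have hint : IntegrableOn (fun x : E3 => x) rightHalfBall :=
    (continuous_id.continuousOn.integrableOn_compact (isCompact_closedBall 0 _)).mono_set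
      fun x hx => Metric.ball_subset_closedBall hx.1
  have hint0 : IntegrableOn (fun x : E3 => x 0) rightHalfBall :=
    (EuclideanSpace.proj (0 : Fin 3) : E3 →L[ℝ] ℝ).integrable_comp hint
  have hxstar : xstar 0 = 2 * ∫ x in rightHalfBall, x 0 :=
    congrArg (2 * ·) ((EuclideanSpace.proj (0 : Fin 3) : E3 →L[ℝ] ℝ).integral_comp_comm hint).symm
  rw [hxstar]
  refine mul_pos two_pos ?_
  have hnonneg : 0 ≤ᵐ[volume.restrict rightHalfBall] fun x : E3 => x 0 :=
    ae_restrict_of_forall_mem measurableSet_rightHalfBall fun x hx => hx.2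
  rw [setIntegral_pos_iff_support_of_nonneg_ae hnonneg hint0]
  -- the coordinate vanishes only on a null hyperplane
  calc (0 : ℝ≥0∞) < volume rightHalfBall := by rw [volume_rightHalfBall]; norm_num
    _ = volume (rightHalfBall \ {x | x 0 = 0}) :=
      (measure_sdiff_null (EuclideanSpace.volume_coord_eq_zero 0)).symm
    _ ≤ volume (Function.support (fun x : E3 => x 0) ∩ rightHalfBall) :=
      measure_mono fun x hx => ⟨hx.2, hx.1⟩

theorem xstar_ne_neg_xstar : xstar ≠ -xstar := by
  intro h
  have h0 : xstar 0 = -xstar 0 := congrArg (· 0) h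
  linarith [xstar_zero_pos]

theorem firstCentroid_of_pos {s : ℝ} (hs : 0 < s) : firstCentroid s = xstar := by
  rw [firstCentroid, lagCell_seedsPair_zero_of_pos hs, rightHalfBall, xstar]

theorem firstCentroid_of_neg {s : ℝ} (hs : s < 0) : firstCentroid s = -xstar := by
  rw [firstCentroid, lagCell_seedsPair_zero_of_neg hs, ← neg_rightHalfBall, setIntegral_id_neg,
    smul_neg, xstar, rightHalfBall]

/-- **The optimal centroid map admits no continuous extension to coincident seeds**
(Remark 4.13, Counterexample 1, of Bourne, Egan, Pelloni, Wilkinson). -/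
theorem optimal_centroid_map_no_continuous_extension :
    -- for `s ∈ (0,1)` the Laguerre cells are the two half-balls
    (∀ s ∈ Ioo (0:ℝ) 1,
      lagCell unitVolBall (seedsPair s) ![0, 0] 0 = {x : E3 | x ∈ unitVolBall ∧ 0 ≤ x 0} ∧
      lagCell unitVolBall (seedsPair s) ![0, 0] 1 = {x : E3 | x ∈ unitVolBall ∧ x 0 ≤ 0}) ∧
    -- each half-ball has measure ½
    volume {x : E3 | x ∈ unitVolBall ∧ 0 ≤ x 0} = ENNReal.ofReal (1/2) ∧
    volume {x : E3 | x ∈ unitVolBall ∧ x 0 ≤ 0} = ENNReal.ofReal (1/2) ∧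
    -- the centroid of the right half-ball has positive first component
    0 < xstar 0 ∧
    -- the centroid of the first cell is `x_*` for `s ∈ (0,1)` and `-x_*` for `s ∈ (-1,0)`
    (∀ s ∈ Ioo (0:ℝ) 1, firstCentroid s = xstar) ∧
    (∀ s ∈ Ioo (-1:ℝ) 0, firstCentroid s = -xstar) ∧
    -- hence the centroid map admits no continuous extension to `s = 0`
    ¬ ∃ f : ℝ → E3, ContinuousOn f (Ioo (-1:ℝ) 1) ∧
        ∀ s ∈ Ioo (-1:ℝ) 1, s ≠ 0 → f s = firstCentroid s := by
  have centroid_pos : ∀ s ∈ Ioo (0:ℝ) 1, firstCentroid s = xstar := fun s hs =>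
    firstCentroid_of_pos hs.1
  have centroid_neg : ∀ s ∈ Ioo (-1:ℝ) 0, firstCentroid s = -xstar := fun s hs =>
    firstCentroid_of_neg hs.2
  exact ⟨fun s hs => ⟨lagCell_seedsPair_zero_of_pos hs.1, lagCell_seedsPair_one_of_pos hs.1⟩,
    volume_rightHalfBall, volume_leftHalfBall, xstar_zero_pos, centroid_pos, centroid_neg,
    not_exists_continuousOn_extension_of_ne xstar_ne_neg_xstar centroid_pos centroid_neg⟩
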